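/- arXiv:1110.2716 — 2 statements merged into one kernel-verified Lean document; each statement's English description precedes it below -/
import Mathlib

section
/- Let S be a t-signed set. Then every element of G^{⟨t⟩}_S lies in the ideal J̃^{⟨t⟩}_S; that is, for connected a, b ∈ S and any K ⊆ {i ∈ [t] : a_i ≠ b_i}, the binomial h_{S,K,a,b} is a sum of binomials of the form ± h_{S,k,c,d} with k ∈ [t] and c,d connected in S. -/
open MvPolynomial Finset

/-- The index set `N = [r 1] × ⋯ × [r n]`, realized as dependent functions. -/
abbrev Idx {n : ℕ} (r : Fin n → ℕ) := ∀ i, Fin (r i)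

variable {n : ℕ} {r : Fin n → ℕ}

/-- The switch `s(K,a,b)`: `b i` in the components of `K`, `a i` elsewhere. -/
def sw (K : Finset (Fin n)) (a b : Idx r) : Idx r := fun i => if i ∈ K then b i else a i

/-- The distance `d(a,b) = #{i : a i ≠ b i}`. -/
def hdist (a b : Idx r) : ℕ := (univ.filter fun i => a i ≠ b i).card

/-- The truncated distance `d_t(a,b) = #{i ∈ [t] : a i ≠ b i}`. -/
def hdistT (t : ℕ) (a b : Idx r) : ℕ :=
  (univ.filter fun i : Fin n => (i : ℕ) < t ∧ a i ≠ b i).card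

/-- `c : ℕ → N` is a path of length `m` from `a` to `b` inside `S`:
consecutive elements differ in exactly one component. -/
def IsPath (S : Set (Idx r)) (a b : Idx r) (m : ℕ) (c : ℕ → Idx r) : Prop :=
  c 0 = a ∧ c m = b ∧ (∀ j ≤ m, c j ∈ S) ∧ ∀ j < m, hdist (c j) (c (j + 1)) = 1

/-- `a` and `b` are connected in `S`. -/
def Connected (S : Set (Idx r)) (a b : Idx r) : Prop := ∃ m c, IsPath S a b m c

/-- The minimal path length `pl_S(a,b)`. -/
noncomputable def pl (S : Set (Idx r)) (a b : Idx r) : ℕ :=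
  sInf {m | ∃ c, IsPath S a b m c}

/-- `S` is `t`-switchable. -/
def Switchable (t : ℕ) (S : Set (Idx r)) : Prop :=
  ∀ a ∈ S, ∀ b ∈ S, hdist a b = 2 → ∀ i : Fin n, (i : ℕ) < t →
    sw {i} a b ∈ S ∧ sw {i} b a ∈ S

/-- `S` is `t`-signed: `t`-switchable, and each connectedness class satisfies one of:
constant first `t` coordinates, pairwise distance at most 1, or path-independent
parity of path lengths. -/
def Signed (t : ℕ) (S : Set (Idx r)) : Prop :=
  Switchable t S ∧
  ∀ a ∈ S,
    (∀ b c, Connected S a b → Connected S a c → ∀ i : Fin n, (i : ℕ) < t → b i = c i) ∨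
    (∀ b c, Connected S a b → Connected S a c → hdist b c ≤ 1) ∨
    (∀ b c, Connected S a b → Connected S a c →
      ∀ m m' p p', IsPath S b c m p → IsPath S b c m' p' → m % 2 = m' % 2)

variable (k : Type*) [Field k]

/-- The generalized determinant `f_{i,a,b}`. -/
noncomputable def fdet (i : Fin n) (a b : Idx r) : MvPolynomial (Idx r) k :=
  X a * X b - X (sw {i} a b) * X (sw {i} b a)

/-- The generalized permanent `g_{i,a,b}`. -/
noncomputable def gperm (i : Fin n) (a b : Idx r) : MvPolynomial (Idx r) k :=
  X a * X b + X (sw {i} a b) * X (sw {i} b a)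

/-- The binomial `h_{S,K,a,b}`. -/
noncomputable def hbin (S : Set (Idx r)) (K : Finset (Fin n)) (a b : Idx r) :
    MvPolynomial (Idx r) k :=
  X a * X b - (-1) ^ (K.card * (pl S a b - 1)) * (X (sw K a b) * X (sw K b a))

/-- The slice permanental ideal `J^⟨t⟩`. -/
noncomputable def Jt (t : ℕ) : Ideal (MvPolynomial (Idx r) k) :=
  Ideal.span {p | ∃ (a b : Idx r) (i : Fin n),
    hdist a b = 2 ∧ (i : ℕ) < t ∧ a i ≠ b i ∧ p = gperm k i a b}

/-- The ideal `J̃^⟨t⟩_S`. -/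
noncomputable def Jtilde (t : ℕ) (S : Set (Idx r)) : Ideal (MvPolynomial (Idx r) k) :=
  Ideal.span {p | ∃ (a b : Idx r) (i : Fin n),
    Connected S a b ∧ (i : ℕ) < t ∧ a i ≠ b i ∧ p = hbin k S {i} a b}

/-- The ideal `Var^⟨t⟩_S = (x_a : a ∉ S)`. -/
noncomputable def VarIdeal (S : Set (Idx r)) : Ideal (MvPolynomial (Idx r) k) :=
  Ideal.span {p | ∃ a ∉ S, p = X a}

/-- The ideal `Q^⟨t⟩_S = Var^⟨t⟩_S + J̃^⟨t⟩_S`. -/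
noncomputable def Qideal (t : ℕ) (S : Set (Idx r)) : Ideal (MvPolynomial (Idx r) k) :=
  VarIdeal k S + Jtilde k t S

/-- The ideal `Ĵ^⟨t⟩`. -/
noncomputable def Jhat (t : ℕ) : Ideal (MvPolynomial (Idx r) k) :=
  Ideal.span {p | ∃ (a b : Idx r) (i : Fin n),
    hdist a b = 3 ∧ hdistT t a b = 3 ∧ (i : ℕ) < t ∧ a i ≠ b i ∧ p = gperm k i a b}

/-- `S` is a maximal `t`-signed set. -/
noncomputable def MaximalSigned (t : ℕ) (S : Set (Idx r)) : Prop :=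
  Signed t S ∧ ∀ T : Set (Idx r), Signed t T → S ⊆ T → Qideal k t S ≤ Qideal k t T

/-! If `i ∈ K`, put `a' = s({i},a,b)` and `b' = s({i},b,a)`. Then `s(K,a,b) = s(K∖{i},a',b')`,
so `h_{S,K,a,b} = h_{S,i,a,b} ± h_{S,K∖{i},a',b'}` as soon as `pl_S(a',b') = pl_S(a,b)`, and
induction on `K` finishes. The equality of path lengths is where switchability enters: a path
of length `m` from `a` to `b` is turned into a path of length at most `m` from `a'` to `b'` by
induction on `m`, looking at its first two steps; since the switch is an involution, the
inequality of minimal lengths goes both ways. -/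

open Function

section Hamming

variable {ι : Type*} [Fintype ι] [DecidableEq ι] {β : ι → Type*} [∀ i, DecidableEq (β i)]

theorem hammingDist_update_right {x : ∀ i, β i} {j : ι} {v : β j} (hv : v ≠ x j) :
    hammingDist x (update x j v) = 1 := by
  rw [hammingDist, Finset.card_eq_one]
  refine ⟨j, Finset.ext fun l => ?_⟩
  by_cases hl : l = j
  · subst hl; simp [hv.symm]
  · simp [hl]

theorem hammingDist_update_update {x : ∀ i, β i} {i j : ι} (hij : i ≠ j) {v : β i} {w : β j}
    (hv : v ≠ x i) (hw : w ≠ x j) : hammingDist x (update (update x i v) j w) = 2 := by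
  rw [hammingDist, Finset.card_eq_two]
  refine ⟨i, j, hij, Finset.ext fun l => ?_⟩
  by_cases hli : l = i
  · subst hli; simp [hij, hv.symm]
  · by_cases hlj : l = j
    · subst hlj; simp [hw.symm]
    · simp [hli, hlj]

theorem exists_eq_update_of_hammingDist_eq_one {x y : ∀ i, β i} (h : hammingDist x y = 1) :
    ∃ j v, v ≠ x j ∧ y = update x j v := by
  obtain ⟨j, hj⟩ := Finset.card_eq_one.mp h
  have hdiff : ∀ l, x l ≠ y l ↔ l = j := fun l => by
    simpa using Finset.ext_iff.mp hj l
  refine ⟨j, y j, ((hdiff j).2 rfl).symm, funext fun l => ?_⟩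
  by_cases hl : l = j
  · subst hl; simp
  · simpa [hl] using (not_not.mp (mt (hdiff l).1 hl)).symm

end Hamming

theorem hdist_eq_hammingDist (a b : Idx r) : hdist a b = hammingDist a b := rfl

theorem sw_singleton (i : Fin n) (a b : Idx r) : sw {i} a b = update a i (b i) := by
  funext l
  by_cases hl : l = i
  · subst hl; simp [sw]
  · simp [sw, hl]

theorem sw_empty (a b : Idx r) : sw ∅ a b = a :=
  funext fun _ => if_neg (notMem_empty _)

theorem sw_insert {i : Fin n} {K : Finset (Fin n)} (hi : i ∉ K) (a b : Idx r) :
    sw (insert i K) a b = sw K (sw {i} a b) (sw {i} b a) := by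
  funext l
  by_cases hl : l = i
  · subst hl; simp [sw, hi]
  · simp [sw, hl]

inductive HasPath (S : Set (Idx r)) : Idx r → Idx r → ℕ → Prop
  | nil {a} : a ∈ S → HasPath S a a 0
  | cons {a b c m} : a ∈ S → hdist a b = 1 → HasPath S b c m → HasPath S a c (m + 1)

variable {S : Set (Idx r)} {a b : Idx r} {m : ℕ}

theorem HasPath.mem_left (h : HasPath S a b m) : a ∈ S := by
  cases h <;> assumption

theorem hasPath_iff_exists_isPath : HasPath S a b m ↔ ∃ c, IsPath S a b m c := by
  constructor
  · intro h
    induction h with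
    | nil ha => exact ⟨fun _ => _, rfl, rfl, fun _ _ => ha, fun j hj => absurd hj j.not_lt_zero⟩
    | @cons a b c m ha hab _ ih =>
      obtain ⟨p, hp0, hpm, hpS, hpstep⟩ := ih
      refine ⟨fun j => if j = 0 then a else p (j - 1), by simp, by simp [hpm], ?_, ?_⟩
      · intro j hj
        by_cases hj0 : j = 0
        · simp [hj0, ha]
        · simpa [hj0] using hpS (j - 1) (by omega)
      · intro j hj
        by_cases hj0 : j = 0
        · simpa [hj0, hp0] using hab
        · have hstep := hpstep (j - 1) (by omega)
          rw [Nat.sub_add_cancel (Nat.pos_of_ne_zero hj0)] at hstep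
          simpa [hj0] using hstep
  · rintro ⟨c, hc0, hcm, hcS, hcstep⟩
    induction m generalizing a c with
    | zero => exact hc0 ▸ hcm ▸ HasPath.nil (hcS 0 le_rfl)
    | succ m ih =>
      refine .cons (hc0 ▸ hcS 0 (Nat.zero_le _)) (hc0 ▸ hcstep 0 m.succ_pos) ?_
      exact ih (c := fun j => c (j + 1)) rfl hcm (fun j hj => hcS _ (by omega))
        (fun j hj => hcstep _ (by omega))

theorem HasPath.connected (h : HasPath S a b m) : Connected S a b :=
  ⟨m, hasPath_iff_exists_isPath.mp h⟩

theorem HasPath.pl_le (h : HasPath S a b m) : pl S a b ≤ m :=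
  Nat.sInf_le (hasPath_iff_exists_isPath.mp h)

theorem Connected.hasPath_pl (h : Connected S a b) : HasPath S a b (pl S a b) :=
  hasPath_iff_exists_isPath.mpr (Nat.sInf_mem h)

theorem HasPath.exists_cons_update (ha : a ∈ S) {j : Fin n} {w : Fin (r j)}
    (h : HasPath S (update a j w) b m) : ∃ m' ≤ m + 1, HasPath S a b m' := by
  by_cases hw : w = a j
  · rw [hw, update_eq_self] at h
    exact ⟨m, by omega, h⟩
  · exact ⟨m + 1, le_rfl, .cons ha (hammingDist_update_right hw) h⟩

section Switch

variable {t : ℕ} {i : Fin n}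

/-- The start of `h` differs from `a` in exactly the coordinates `i` and `j`, so switchability
puts `update a i (b i)` into `S`, next to it. -/
theorem HasPath.cons_switch (hSw : Switchable t S) (hi : (i : ℕ) < t) (ha : a ∈ S)
    {j : Fin n} (hji : j ≠ i) {v : Fin (r j)} (hv : v ≠ a j) (hne : a i ≠ b i) {y : Idx r}
    (h : HasPath S (update (update a j v) i (b i)) y m) :
    HasPath S (update a i (b i)) y (m + 1) := by
  have hd : hdist a (update (update a j v) i (b i)) = 2 :=
    hammingDist_update_update hji hv (by simpa [hji.symm] using hne.symm)
  have hS := (hSw a ha _ h.mem_left hd i hi).1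
  rw [sw_singleton, update_self] at hS
  refine .cons hS ?_ h
  rw [hdist_eq_hammingDist, update_comm hji]
  exact hammingDist_update_right (by simpa [hji] using hv)

theorem HasPath.exists_switch (hSw : Switchable t S) (hi : (i : ℕ) < t) :
    ∀ {m a b}, HasPath S a b m → a i ≠ b i →
      ∃ m' ≤ m, HasPath S (update a i (b i)) (update b i (a i)) m' := by
  intro m
  induction m using Nat.strong_induction_on with
  | _ m IH =>
  intro a b hab hne
  obtain ⟨ha⟩ | ⟨ha, hac, hcb⟩ := hab
  · exact absurd rfl hne
  obtain ⟨j, v, hv, rfl⟩ := exists_eq_update_of_hammingDist_eq_one hac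
  by_cases hji : j = i
  · subst hji
    obtain ⟨hb⟩ | ⟨-, hcd, hdb⟩ := hcb
    · -- the path is a single edge, which the switch reverses
      refine ⟨1, le_rfl, ?_⟩
      simp only [update_self, update_idem, update_eq_self]
      refine .cons hb ?_ (.nil ha)
      rw [hdist_eq_hammingDist, hammingDist_comm]
      exact hammingDist_update_right hv
    obtain ⟨l, w, hw, rfl⟩ := exists_eq_update_of_hammingDist_eq_one hcd
    by_cases hlj : l = j
    · -- two consecutive steps in coordinate `j` can be shortcut
      subst hlj
      rw [update_idem] at hdb
      obtain ⟨m'', hm'', h''⟩ := hdb.exists_cons_update ha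
      obtain ⟨m', hm', h⟩ := IH _ (by omega) h'' hne
      exact ⟨m', by omega, h⟩
    · -- switchability lets the path take its second step first
      have hd : hdist a (update (update a j v) l w) = 2 :=
        hammingDist_update_update (Ne.symm hlj) hv (by simpa [hlj] using hw)
      have heS := (hSw a ha _ hdb.mem_left hd j hi).2
      rw [sw_singleton, update_comm hlj, update_idem, update_eq_self] at heS
      have hed : hdist (update a l w) (update (update a j v) l w) = 1 := by
        rw [hdist_eq_hammingDist, update_comm (Ne.symm hlj)]
        exact hammingDist_update_right (by simpa [Ne.symm hlj] using hv)
      obtain ⟨m', hm', h⟩ :=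
        IH _ (by omega) (.cons heS hed hdb) (by simpa [Ne.symm hlj] using hne)
      rw [update_of_ne (Ne.symm hlj)] at h
      exact ⟨m' + 1, by omega, h.cons_switch hSw hi ha hlj (by simpa [hlj] using hw) hne⟩
  · obtain ⟨m', hm', h⟩ := IH _ (by omega) hcb (by simpa [Ne.symm hji] using hne)
    rw [update_of_ne (Ne.symm hji)] at h
    exact ⟨m' + 1, by omega, h.cons_switch hSw hi ha hji hv hne⟩

theorem Connected.switch (hSw : Switchable t S) (hi : (i : ℕ) < t) (hab : Connected S a b)
    (hne : a i ≠ b i) :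
    Connected S (sw {i} a b) (sw {i} b a) ∧ pl S (sw {i} a b) (sw {i} b a) = pl S a b := by
  rw [sw_singleton, sw_singleton]
  obtain ⟨m, hm, h⟩ := hab.hasPath_pl.exists_switch hSw hi hne
  refine ⟨h.connected, le_antisymm (h.pl_le.trans hm) ?_⟩
  obtain ⟨m', hm', h'⟩ := h.connected.hasPath_pl.exists_switch hSw hi (by simpa using hne.symm)
  simp only [update_self, update_idem, update_eq_self] at h'
  exact h'.pl_le.trans hm'

end Switch

theorem hbin_empty : hbin k S ∅ a b = 0 := by
  simp [hbin, sw_empty]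

theorem hbin_insert {i : Fin n} {K : Finset (Fin n)} (hi : i ∉ K)
    (hpl : pl S (sw {i} a b) (sw {i} b a) = pl S a b) :
    hbin k S (insert i K) a b =
      hbin k S {i} a b + (-1) ^ (pl S a b - 1) * hbin k S K (sw {i} a b) (sw {i} b a) := by
  simp only [hbin, sw_insert hi, hpl, card_insert_of_notMem hi, card_singleton]
  ring

theorem hbin_mem_Jtilde {t : ℕ} (hSw : Switchable t S) {K : Finset (Fin n)} :
    ∀ {a b : Idx r}, Connected S a b → (∀ i ∈ K, (i : ℕ) < t ∧ a i ≠ b i) →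
      hbin k S K a b ∈ Jtilde k t S := by
  induction K using Finset.induction_on with
  | empty => simp [hbin_empty]
  | @insert i K hiK ih =>
    intro a b hab hK
    obtain ⟨hit, hne⟩ := hK i (mem_insert_self i K)
    obtain ⟨hconn, hpl⟩ := hab.switch hSw hit hne
    rw [hbin_insert k hiK hpl]
    refine add_mem (Ideal.subset_span ⟨a, b, i, hab, hit, hne, rfl⟩)
      (Ideal.mul_mem_left _ _ (ih hconn fun j hj => ?_))
    have hji : j ≠ i := ne_of_mem_of_not_mem hj hiK
    simpa [sw, hji] using hK j (mem_insert_of_mem hj)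

theorem stmt9 (t : ℕ) (S : Set (Idx r)) (hS : Signed t S)
    (a b : Idx r) (hab : Connected S a b) (K : Finset (Fin n))
    (hK : ∀ i ∈ K, (i : ℕ) < t ∧ a i ≠ b i) :
    hbin k S K a b ∈ Jtilde k t S :=
  hbin_mem_Jtilde k hS.1 hab hK
end

section
/- Let U ⊆ N be contained in a 2 × 3 submatrix of N whose entries vary only in components i and j, where at least one of i, j lies in [t]. Suppose U is not contained in any 2 × 2 submatrix nor in any 1 × 3 submatrix. Then U is not a subset of any t-signed set. -/
open MvPolynomial Finset

variable {n : ℕ} {r : Fin n → ℕ}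

variable (k : Type*) [Field k]

/-! Switching in whichever of the coordinates `i`, `j` lies in `[t]` completes rectangles among
the points that agree with `v` outside `i` and `j`: if two opposite corners of such a rectangle
lie in `S`, so do the other two. Since `U` meets two rows and all three columns, this
puts a whole row of three points of the grid, and one point of the other row, into a single
connectedness class of `S`. That class varies in a coordinate of `[t]`, contains two points at
distance 2, and contains paths of lengths 1 and 2 between the same two points, so it satisfies
none of the three alternatives in the definition of a signed set. -/

section Grid

variable {i j : Fin n} {v : Idx r}

def gridPoint (i j : Fin n) (v : Idx r) (p : Fin (r i)) (q : Fin (r j)) : Idx r :=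
  Function.update (Function.update v i p) j q

@[simp]
lemma gridPoint_apply_left (hij : i ≠ j) (p : Fin (r i)) (q : Fin (r j)) :
    gridPoint i j v p q i = p := by
  simp [gridPoint, Function.update_of_ne hij]

@[simp]
lemma gridPoint_apply_right (p : Fin (r i)) (q : Fin (r j)) : gridPoint i j v p q j = q := by
  simp [gridPoint]

lemma gridPoint_apply_of_ne {m : Fin n} (hmi : m ≠ i) (hmj : m ≠ j) (p : Fin (r i))
    (q : Fin (r j)) : gridPoint i j v p q m = v m := by
  simp [gridPoint, Function.update_of_ne hmj, Function.update_of_ne hmi]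

lemma gridPoint_self (hij : i ≠ j) {a : Idx r} (ha : ∀ m, m ≠ i → m ≠ j → a m = v m) :
    gridPoint i j v (a i) (a j) = a := by
  funext m
  rcases eq_or_ne m i with rfl | hmi
  · exact gridPoint_apply_left hij _ _
  rcases eq_or_ne m j with rfl | hmj
  · exact gridPoint_apply_right _ _
  rw [gridPoint_apply_of_ne hmi hmj, ha m hmi hmj]

lemma hdist_gridPoint (hij : i ≠ j) (p p' : Fin (r i)) (q q' : Fin (r j)) :
    hdist (gridPoint i j v p q) (gridPoint i j v p' q') =
      (if p = p' then 0 else 1) + (if q = q' then 0 else 1) := by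
  have hdiff : ∀ m, gridPoint i j v p q m ≠ gridPoint i j v p' q' m ↔
      m = i ∧ p ≠ p' ∨ m = j ∧ q ≠ q' := by
    intro m
    rcases eq_or_ne m i with rfl | hmi
    · simp [hij]
    rcases eq_or_ne m j with rfl | hmj
    · simp [hmi]
    simp [gridPoint_apply_of_ne hmi hmj, hmi, hmj]
  simp only [hdist, hdiff]
  split_ifs with hp hq hq <;> simp [hp, hq, filter_or, filter_eq', card_pair hij]

lemma sw_left_gridPoint (hij : i ≠ j) (p p' : Fin (r i)) (q q' : Fin (r j)) :
    sw {i} (gridPoint i j v p q) (gridPoint i j v p' q') = gridPoint i j v p' q := by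
  funext m
  rcases eq_or_ne m i with rfl | hmi
  · simp [sw, hij]
  rcases eq_or_ne m j with rfl | hmj
  · simp [sw, hmi]
  simp [sw, hmi, gridPoint_apply_of_ne hmi hmj]

lemma sw_right_gridPoint (hij : i ≠ j) (p p' : Fin (r i)) (q q' : Fin (r j)) :
    sw {j} (gridPoint i j v p q) (gridPoint i j v p' q') = gridPoint i j v p q' := by
  funext m
  rcases eq_or_ne m j with rfl | hmj
  · simp [sw]
  rcases eq_or_ne m i with rfl | hmi
  · simp [sw, hij]
  simp [sw, hmj, gridPoint_apply_of_ne hmi hmj]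

lemma Switchable.gridPoint_mem {t : ℕ} {S : Set (Idx r)} (hS : Switchable t S) (hij : i ≠ j)
    (hit : (i : ℕ) < t ∨ (j : ℕ) < t) {p p' : Fin (r i)} {q q' : Fin (r j)}
    (hrow : gridPoint i j v p q ∈ S) (hcol : gridPoint i j v p' q' ∈ S) :
    gridPoint i j v p q' ∈ S := by
  rcases eq_or_ne p p' with rfl | hp
  · exact hcol
  rcases eq_or_ne q q' with rfl | hq
  · exact hrow
  rcases hit with hi | hj
  · have hd : hdist (gridPoint i j v p' q') (gridPoint i j v p q) = 2 := by
      simp [hdist_gridPoint hij, hp.symm, hq.symm]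
    simpa only [sw_left_gridPoint hij] using (hS _ hcol _ hrow hd i hi).1
  · have hd : hdist (gridPoint i j v p q) (gridPoint i j v p' q') = 2 := by
      simp [hdist_gridPoint hij, hp, hq]
    simpa only [sw_right_gridPoint hij] using (hS _ hrow _ hcol hd j hj).1

end Grid

section Paths

variable {S : Set (Idx r)} {a b c : Idx r}

lemma Connected.refl (ha : a ∈ S) : Connected S a a :=
  ⟨0, fun _ => a, rfl, rfl, fun _ _ => ha, fun _ h => absurd h (Nat.not_lt_zero _)⟩

lemma isPath_one (ha : a ∈ S) (hb : b ∈ S) (hab : hdist a b = 1) :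
    IsPath S a b 1 (fun m => if m = 0 then a else b) := by
  refine ⟨rfl, rfl, fun m _ => ?_, fun m hm => ?_⟩
  · dsimp only
    split_ifs <;> assumption
  · interval_cases m
    simpa using hab

lemma isPath_two (ha : a ∈ S) (hb : b ∈ S) (hc : c ∈ S) (hab : hdist a b = 1)
    (hbc : hdist b c = 1) :
    IsPath S a c 2 (fun m => if m = 0 then a else if m = 1 then b else c) := by
  refine ⟨rfl, rfl, fun m _ => ?_, fun m hm => ?_⟩
  · dsimp only
    split_ifs <;> assumption
  · interval_cases m
    · simpa using hab
    · simpa using hbc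

lemma connected_of_hdist_eq_one (ha : a ∈ S) (hb : b ∈ S) (hab : hdist a b = 1) :
    Connected S a b :=
  ⟨1, _, isPath_one ha hb hab⟩

end Paths

lemma not_signed_of_gridPoint_mem {t : ℕ} {S : Set (Idx r)} {i j : Fin n} {v : Idx r}
    (hij : i ≠ j) (hit : (i : ℕ) < t ∨ (j : ℕ) < t) {p p' : Fin (r i)} {q₁ q₂ q₃ : Fin (r j)}
    (hp : p ≠ p') (h₁₂ : q₁ ≠ q₂) (h₁₃ : q₁ ≠ q₃) (h₂₃ : q₂ ≠ q₃)
    (h₁ : gridPoint i j v p q₁ ∈ S) (h₂ : gridPoint i j v p q₂ ∈ S)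
    (h₃ : gridPoint i j v p q₃ ∈ S) (h₁' : gridPoint i j v p' q₁ ∈ S) : ¬ Signed t S := by
  rintro ⟨-, hclass⟩
  have hd₁₂ : hdist (gridPoint i j v p q₁) (gridPoint i j v p q₂) = 1 := by
    simp [hdist_gridPoint hij, h₁₂]
  have hd₁' : hdist (gridPoint i j v p q₁) (gridPoint i j v p' q₁) = 1 := by
    simp [hdist_gridPoint hij, hp]
  have hconn₁ := Connected.refl h₁
  have hconn₂ := connected_of_hdist_eq_one h₁ h₂ hd₁₂
  have hconn₁' := connected_of_hdist_eq_one h₁ h₁' hd₁'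
  rcases hclass _ h₁ with hconst | hnear | hparity
  · rcases hit with hi | hj
    · exact hp (by simpa [hij] using hconst _ _ hconn₁ hconn₁' i hi)
    · exact h₁₂ (by simpa using hconst _ _ hconn₁ hconn₂ j hj)
  · simpa [hdist_gridPoint hij, hp.symm, h₁₂] using hnear _ _ hconn₁' hconn₂
  · have hd₁₃ : hdist (gridPoint i j v p q₁) (gridPoint i j v p q₃) = 1 := by
      simp [hdist_gridPoint hij, h₁₃]
    have hd₃₂ : hdist (gridPoint i j v p q₃) (gridPoint i j v p q₂) = 1 := by
      simp [hdist_gridPoint hij, h₂₃.symm]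
    simpa using hparity _ _ hconn₁ hconn₂ 1 2 _ _ (isPath_one h₁ h₂ hd₁₂)
      (isPath_two h₁ h₃ h₂ hd₁₃ hd₃₂)

theorem stmt13_general (t : ℕ) (U : Set (Idx r)) (i j : Fin n) (hij : i ≠ j)
    (hit : (i : ℕ) < t ∨ (j : ℕ) < t)
    (P : Set (Fin (r i))) (Q : Set (Fin (r j))) (hQ : Q.ncard = 3)
    (v : Idx r)
    (hU : ∀ a ∈ U, a i ∈ P ∧ a j ∈ Q ∧ ∀ m, m ≠ i → m ≠ j → a m = v m)
    (hnot22 : ¬ ∃ B : Set (Fin (r j)), B.ncard ≤ 2 ∧ ∀ a ∈ U, a j ∈ B)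
    (hnot13 : ¬ ∃ c : Fin (r i), ∀ a ∈ U, a i = c) :
    ∀ S : Set (Idx r), Signed t S → ¬ U ⊆ S := by
  intro S hS hUS
  have hmem : ∀ a ∈ U, gridPoint i j v (a i) (a j) ∈ S := fun a ha => by
    rw [gridPoint_self hij (hU a ha).2.2]
    exact hUS ha
  have hcol : ∀ q ∈ Q, ∃ a ∈ U, a j = q := by
    by_contra! ⟨q, hq, hmiss⟩
    refine hnot22 ⟨Q \ {q}, ?_, fun a ha => ⟨(hU a ha).2.1, hmiss a ha⟩⟩
    have := Set.ncard_sdiff_singleton_lt_of_mem hq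
    omega
  have hrow : ∀ a ∈ U, ∀ q ∈ Q, gridPoint i j v (a i) q ∈ S := by
    intro a ha q hq
    obtain ⟨b, hb, rfl⟩ := hcol q hq
    exact hS.1.gridPoint_mem hij hit (hmem a ha) (hmem b hb)
  push Not at hnot13
  obtain ⟨x, hx, -⟩ := hnot13 (v i)
  obtain ⟨y, hy, hxy⟩ := hnot13 (x i)
  obtain ⟨q₁, q₂, q₃, h₁₂, h₁₃, h₂₃, rfl⟩ := Set.ncard_eq_three.mp hQ
  exact not_signed_of_gridPoint_mem hij hit (Ne.symm hxy) h₁₂ h₁₃ h₂₃ (hrow x hx q₁ (by simp))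
    (hrow x hx q₂ (by simp)) (hrow x hx q₃ (by simp)) (hrow y hy q₁ (by simp)) hS

/-- a subset of a `2 × 3` submatrix (varying in components `i`, `j` with
`i ∈ [t]` or `j ∈ [t]`) that fits in no `2 × 2` nor `1 × 3` submatrix is contained in
no `t`-signed set. -/
theorem stmt13 (t : ℕ) (U : Set (Idx r)) (i j : Fin n) (hij : i ≠ j)
    (hit : (i : ℕ) < t ∨ (j : ℕ) < t)
    (P : Set (Fin (r i))) (Q : Set (Fin (r j))) (hP : P.ncard = 2) (hQ : Q.ncard = 3)
    (v : Idx r)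
    (hU : ∀ a ∈ U, a i ∈ P ∧ a j ∈ Q ∧ ∀ m, m ≠ i → m ≠ j → a m = v m)
    (hnot22 : ¬ ∃ B : Set (Fin (r j)), B.ncard ≤ 2 ∧ ∀ a ∈ U, a j ∈ B)
    (hnot13 : ¬ ∃ c : Fin (r i), ∀ a ∈ U, a i = c) :
    ∀ S : Set (Idx r), Signed t S → ¬ U ⊆ S :=
  stmt13_general t U i j hij hit P Q hQ v hU hnot22 hnot13
end
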